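/- Let λ ∈ ℝ with λ ≠ 0 and let v₀,…,v₈ be the D2Q9 velocities. For every ũ ∈ ℝ² and every α ∈ ℝ, there exists an invertible 9×9 real matrix T with determinant 1 such that M_{ũ,α} = T · M_{ũ,0}, where M_{ũ,α} is the moment matrix with entries (M_{ũ,α})_{kj} = P_k^α(vⱼ − ũ) for the polynomial family (P₀^α,…,P₈^α) = (1, X, Y, X²+Y², X²−Y², XY, X(αX²+Y²), Y(X²+αY²), (α/2)(X⁴+Y⁴)+X²Y²); moreover T differs from the identity only in rows 6, 7 and 8, where it adds α-multiples of the rows 0, 1, 2, 3, 4. -/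

import Mathlib

/-- x-components of the D2Q9 velocities. -/
def vx (lam : ℝ) : Fin 9 → ℝ := ![0, lam, 0, -lam, 0, lam, -lam, -lam, lam]

/-- y-components of the D2Q9 velocities. -/
def vy (lam : ℝ) : Fin 9 → ℝ := ![0, 0, lam, 0, -lam, lam, lam, -lam, -lam]

/-- The moment polynomials `1, X, Y, X²+Y², X²−Y², XY, X(αX²+Y²), Y(X²+αY²),
(α/2)(X⁴+Y⁴)+X²Y²` evaluated at `(x, y)`. -/
noncomputable def P (α x y : ℝ) : Fin 9 → ℝ :=
  ![1, x, y, x ^ 2 + y ^ 2, x ^ 2 - y ^ 2, x * y,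
    x * (α * x ^ 2 + y ^ 2), y * (x ^ 2 + α * y ^ 2),
    α / 2 * (x ^ 4 + y ^ 4) + x ^ 2 * y ^ 2]

/-- The moment matrix `(M_{ũ,α})_{kj} = P_k^α(v_j − ũ)`. -/
noncomputable def Mmat (lam α ux uy : ℝ) : Matrix (Fin 9) (Fin 9) ℝ :=
  fun k j => P α (vx lam j - ux) (vy lam j - uy) k

/-! Every D2Q9 velocity component `v` lies in `{0, λ, -λ}`, hence satisfies `v³ = λ² v`. On such
values the cubic and quartic powers of `v - u` are polynomials of degree at most two in `v - u`
(with coefficients depending on `u`). So the `α`-parts `αX³`, `αY³`, `(α/2)(X⁴ + Y⁴)` of the last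
three moments are, column by column, fixed combinations of the moments `1, X, Y, X² ± Y²`: this
gives `T = 1 + α E` with `E` strictly lower triangular, hence `det T = 1`. -/

open Matrix

theorem Matrix.det_one_add_of_apply_ne_zero_lt {n R : Type*} [CommRing R] [Fintype n]
    [DecidableEq n] [LinearOrder n] {E : Matrix n n R} (hE : ∀ i j, E i j ≠ 0 → j < i) :
    (1 + E).det = 1 := by
  have hdiag : ∀ i, E i i = 0 := fun i => by_contra fun h => lt_irrefl i (hE i i h)
  have hlower : E.IsLowerTriangular := fun i j hij => by_contra fun h => (hE i j h).not_gt hij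
  rw [det_of_isLowerTriangular _ (blockTriangular_one.add hlower)]
  simp [hdiag]

theorem sub_pow_three_of_pow_three_eq {R : Type*} [CommRing R] {v c : R} (hv : v ^ 3 = c * v)
    (u : R) :
    (v - u) ^ 3 = (c * u - u ^ 3) + (c - 3 * u ^ 2) * (v - u) - 3 * u * (v - u) ^ 2 := by
  linear_combination hv

theorem sub_pow_four_of_pow_three_eq {R : Type*} [CommRing R] {v c : R} (hv : v ^ 3 = c * v)
    (u : R) :
    (v - u) ^ 4 = 3 * u ^ 4 - 3 * c * u ^ 2 + (8 * u ^ 3 - 2 * c * u) * (v - u)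
      + (6 * u ^ 2 + c) * (v - u) ^ 2 := by
  linear_combination (v - 4 * u) * hv

theorem vx_pow_three (lam : ℝ) (j : Fin 9) : vx lam j ^ 3 = lam ^ 2 * vx lam j := by
  fin_cases j <;> simp [vx] <;> ring

theorem vy_pow_three (lam : ℝ) (j : Fin 9) : vy lam j ^ 3 = lam ^ 2 * vy lam j := by
  fin_cases j <;> simp [vy] <;> ring

/-- Rows `6, 7, 8` write `X³`, `Y³` and `(X⁴ + Y⁴)/2` in the moments `1, X, Y, X² + Y², X² − Y²`
when the velocity components satisfy `v³ = c v` (for D2Q9, `c = λ²`). -/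
noncomputable def cascadedCorrection (c ux uy : ℝ) : Matrix (Fin 9) (Fin 9) ℝ :=
  Matrix.of ![0, 0, 0, 0, 0, 0,
    ![c * ux - ux ^ 3, c - 3 * ux ^ 2, 0, -3 * ux / 2, -3 * ux / 2, 0, 0, 0, 0],
    ![c * uy - uy ^ 3, 0, c - 3 * uy ^ 2, -3 * uy / 2, 3 * uy / 2, 0, 0, 0, 0],
    ![3 / 2 * (ux ^ 4 - c * ux ^ 2 + uy ^ 4 - c * uy ^ 2), 4 * ux ^ 3 - c * ux,
      4 * uy ^ 3 - c * uy, (3 * ux ^ 2 + 3 * uy ^ 2 + c) / 2, 3 / 2 * (ux ^ 2 - uy ^ 2), 0, 0, 0, 0]]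

theorem mem_of_cascadedCorrection_apply_ne_zero {c ux uy : ℝ} {k j : Fin 9}
    (h : cascadedCorrection c ux uy k j ≠ 0) :
    k ∈ ({6, 7, 8} : Set (Fin 9)) ∧ j ∈ ({0, 1, 2, 3, 4} : Set (Fin 9)) := by
  fin_cases k <;> fin_cases j <;> simp [cascadedCorrection] at h ⊢

theorem cascadedCorrection_apply_ne_zero_lt {c ux uy : ℝ} {k j : Fin 9}
    (h : cascadedCorrection c ux uy k j ≠ 0) : j < k := by
  obtain ⟨hk, hj⟩ := mem_of_cascadedCorrection_apply_ne_zero h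
  simp only [Set.mem_insert_iff, Set.mem_singleton_iff] at hk hj
  rcases hk with rfl | rfl | rfl <;> rcases hj with rfl | rfl | rfl | rfl | rfl <;> decide

theorem P_eq_one_add_smul_mulVec {c v w : ℝ} (hv : v ^ 3 = c * v) (hw : w ^ 3 = c * w)
    (α ux uy : ℝ) :
    P α (v - ux) (w - uy) = (1 + α • cascadedCorrection c ux uy) *ᵥ P 0 (v - ux) (w - uy) := by
  have hx3 := sub_pow_three_of_pow_three_eq hv ux
  have hy3 := sub_pow_three_of_pow_three_eq hw uy
  have hx4 := sub_pow_four_of_pow_three_eq hv ux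
  have hy4 := sub_pow_four_of_pow_three_eq hw uy
  rw [add_mulVec, one_mulVec, smul_mulVec]
  ext k
  fin_cases k <;> simp [P, cascadedCorrection]
  · linear_combination α * hx3
  · linear_combination α * hy3
  · linear_combination α / 2 * (hx4 + hy4)

theorem Mmat_eq_mul (lam α ux uy : ℝ) :
    Mmat lam α ux uy = (1 + α • cascadedCorrection (lam ^ 2) ux uy) * Mmat lam 0 ux uy := by
  ext k j
  exact congrFun (P_eq_one_add_smul_mulVec (vx_pow_three lam j) (vy_pow_three lam j) α ux uy) k

theorem stmt_14_general (lam : ℝ) (ux uy : ℝ) (α : ℝ) :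
    ∃ T : Matrix (Fin 9) (Fin 9) ℝ, IsUnit T ∧ T.det = 1 ∧
      Mmat lam α ux uy = T * Mmat lam 0 ux uy ∧
      ∃ E : Matrix (Fin 9) (Fin 9) ℝ,
        T = 1 + α • E ∧
        ∀ k j, E k j ≠ 0 →
          k ∈ ({6, 7, 8} : Set (Fin 9)) ∧ j ∈ ({0, 1, 2, 3, 4} : Set (Fin 9)) := by
  set E := cascadedCorrection (lam ^ 2) ux uy
  have hdet : (1 + α • E).det = 1 :=
    det_one_add_of_apply_ne_zero_lt fun k j h =>
      cascadedCorrection_apply_ne_zero_lt (right_ne_zero_of_smul (show α • E k j ≠ 0 from h))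
  exact ⟨1 + α • E, (isUnit_iff_isUnit_det _).2 (hdet ▸ isUnit_one), hdet, Mmat_eq_mul lam α ux uy,
    E, rfl, fun _ _ => mem_of_cascadedCorrection_apply_ne_zero⟩

/-- The moment matrix `M_{ũ,α}` is obtained from the cascaded moment matrix
`M_{ũ,0}` by an invertible change of basis `T` of determinant one: `T` is the
identity plus an `α`-multiple of a matrix supported on the rows `6, 7, 8` and
the columns `0, 1, 2, 3, 4`. -/
theorem stmt_14 (lam : ℝ) (hlam : lam ≠ 0) (ux uy : ℝ) (α : ℝ) :
    ∃ T : Matrix (Fin 9) (Fin 9) ℝ, IsUnit T ∧ T.det = 1 ∧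
      Mmat lam α ux uy = T * Mmat lam 0 ux uy ∧
      ∃ E : Matrix (Fin 9) (Fin 9) ℝ,
        T = 1 + α • E ∧
        ∀ k j, E k j ≠ 0 →
          k ∈ ({6, 7, 8} : Set (Fin 9)) ∧ j ∈ ({0, 1, 2, 3, 4} : Set (Fin 9)) :=
  stmt_14_general lam ux uy α
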